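/- Let X be a rack, R a reflexive compatible relation on X, and N a normal subgroup of Inn(X) (the subgroup of Aut(X) generated by the symmetries S_x). Then the N-orbit relation ∼_N (x ∼_N y iff x·g = y for some g ∈ N) permutes with R: ∼_N ∘ R = R ∘ ∼_N. -/

import Mathlib

/-- A rack: a set with operations `◁`, `◁⁻¹` satisfying (R1) and (R2). -/
class PaperRack (X : Type*) where
  act : X → X → X
  inv : X → X → X
  r1a : ∀ x y, inv (act x y) y = x
  r1b : ∀ x y, act (inv x y) y = x
  r2 : ∀ x y z, act (act x y) z = act (act x z) (act y z)

infixl:70 " ◁ " => PaperRack.act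
infixl:70 " ◁⁻¹ " => PaperRack.inv

/-- The symmetry `S_x : w ↦ w ◁ x`, as a permutation of the rack. -/
def rackSym {X : Type*} [PaperRack X] (x : X) : Equiv.Perm X where
  toFun w := w ◁ x
  invFun w := w ◁⁻¹ x
  left_inv w := PaperRack.r1a w x
  right_inv w := PaperRack.r1b w x

/-- The group `Inn(X)` of inner automorphisms: the subgroup of `Perm X`
generated by the symmetries `S_x`. -/
def Inn (X : Type*) [PaperRack X] : Subgroup (Equiv.Perm X) :=
  Subgroup.closure (Set.range (rackSym (X := X)))

/-!
Compatibility of `R` with `◁` and `◁⁻¹`, applied to `R u u`, shows that every symmetry `S_u`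
preserves and reflects `R`; hence so does every element of `Inn(X)`, in particular of `N`.
For such a `g`, `R (g a) b ↔ R a (g⁻¹ b)`, which turns a path `a ∼_N c R b` into
`a R g⁻¹ b ∼_N b` and conversely.
-/

def relStabilizer {α : Type*} (R : α → α → Prop) : Subgroup (Equiv.Perm α) where
  carrier := {g | ∀ x y, R (g x) (g y) ↔ R x y}
  one_mem' _ _ := Iff.rfl
  mul_mem' hg hh x y := (hg _ _).trans (hh x y)
  inv_mem' {g} hg x y := by
    simpa only [Equiv.Perm.coe_inv, Equiv.apply_symm_apply] using (hg (g⁻¹ x) (g⁻¹ y)).symm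

theorem mem_relStabilizer {α : Type*} {R : α → α → Prop} {g : Equiv.Perm α} :
    g ∈ relStabilizer R ↔ ∀ x y, R (g x) (g y) ↔ R x y :=
  Iff.rfl

theorem orbit_comp_iff_comp_orbit {α : Type*} {R : α → α → Prop}
    {N : Subgroup (Equiv.Perm α)} (hN : N ≤ relStabilizer R) (a b : α) :
    (∃ c, (∃ g ∈ N, g a = c) ∧ R c b) ↔ (∃ c, R a c ∧ ∃ g ∈ N, g c = b) := by
  constructor
  · rintro ⟨_, ⟨g, hg, rfl⟩, hR⟩
    have hR' : R a (g⁻¹ b) := by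
      rwa [← mem_relStabilizer.1 (hN hg), Equiv.Perm.coe_inv, Equiv.apply_symm_apply]
    exact ⟨g⁻¹ b, hR', g, hg, Equiv.apply_symm_apply g b⟩
  · rintro ⟨c, hR, g, hg, rfl⟩
    exact ⟨g a, ⟨g, hg, rfl⟩, (mem_relStabilizer.1 (hN hg) a c).2 hR⟩

section Rack

variable {X : Type*} [PaperRack X] {R : X → X → Prop}

theorem rackSym_mem_relStabilizer (hrefl : ∀ x, R x x)
    (hact : ∀ x y u v, R x y → R u v → R (x ◁ u) (y ◁ v))
    (hinv : ∀ x y u v, R x y → R u v → R (x ◁⁻¹ u) (y ◁⁻¹ v)) (u : X) :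
    rackSym u ∈ relStabilizer R := fun x y =>
  ⟨fun h => by simpa only [PaperRack.r1a] using hinv (x ◁ u) (y ◁ u) u u h (hrefl u),
    fun h => hact x y u u h (hrefl u)⟩

theorem inn_le_relStabilizer (hrefl : ∀ x, R x x)
    (hact : ∀ x y u v, R x y → R u v → R (x ◁ u) (y ◁ v))
    (hinv : ∀ x y u v, R x y → R u v → R (x ◁⁻¹ u) (y ◁⁻¹ v)) :
    Inn X ≤ relStabilizer R :=
  Subgroup.closure_le _ |>.2 <| Set.range_subset_iff.2 <|
    rackSym_mem_relStabilizer hrefl hact hinv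

end Rack

theorem orbit_congruence_permutes_general {X : Type*} [PaperRack X]
    (R : X → X → Prop) (hrefl : ∀ x, R x x)
    (hact : ∀ x y u v, R x y → R u v → R (x ◁ u) (y ◁ v))
    (hinv : ∀ x y u v, R x y → R u v → R (x ◁⁻¹ u) (y ◁⁻¹ v))
    (N : Subgroup (Equiv.Perm X)) (hN : N ≤ Inn X) :
    ∀ a b : X,
      (∃ c, (∃ g ∈ N, g a = c) ∧ R c b) ↔ (∃ c, R a c ∧ ∃ g ∈ N, g c = b) :=
  orbit_comp_iff_comp_orbit (hN.trans (inn_le_relStabilizer hrefl hact hinv))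

/-- For a normal subgroup `N` of `Inn(X)`, the orbit relation `∼_N` permutes
with any reflexive compatible relation `R` on `X`. -/
theorem orbit_congruence_permutes {X : Type*} [PaperRack X]
    (R : X → X → Prop) (hrefl : ∀ x, R x x)
    (hact : ∀ x y u v, R x y → R u v → R (x ◁ u) (y ◁ v))
    (hinv : ∀ x y u v, R x y → R u v → R (x ◁⁻¹ u) (y ◁⁻¹ v))
    (N : Subgroup (Equiv.Perm X)) (hN : N ≤ Inn X)
    (hnormal : ∀ g ∈ Inn X, ∀ n ∈ N, g * n * g⁻¹ ∈ N) :
    ∀ a b : X,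
      (∃ c, (∃ g ∈ N, g a = c) ∧ R c b) ↔ (∃ c, R a c ∧ ∃ g ∈ N, g c = b) :=
  orbit_congruence_permutes_general R hrefl hact hinv N hN
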